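/- Let N be a natural number and let l_1, ..., l_N, l'_1, ..., l'_N be integers such that (1) l_i > 0 and l'_i ≥ 0 for all i; (2) ∑_{i=1}^N l_i ≥ ∑_{i=1}^N l'_i; and (3) ∑_{i=1}^N l_i Q_i ≡ ∑_{i=1}^N l'_i Q_i (mod ∑_{i=1}^N l_i Q_i + 1), where Q_1 = 1 and Q_i = ∏_{j=1}^{i-1} (l_j + 1) for i ≥ 2. Then l_i = l'_i for all i. -/

import Mathlib

/-!
With place values `Q i = ∏_{j<i} (l j + 1)`, the number `F = ∑ l i * Q i` is the largest one with
`N` digits, so `F + 1 = ∏ (l j + 1)` and the hypothesis says `∑ l' i * Q i + 1 = k * (F + 1)` for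
some `k ≥ 1`.
Peeling off the most significant digit shows by induction that any digit vector `a` with
`∑ a i * Q i + 1 = k * ∏ (l j + 1)` has digit sum at least `∑ l + k - 1`, and, since every `l j > 0`,
with equality only for `k = 1` and `a = l`. The digit sum of `l'` is at most `∑ l`, which forces
equality.
-/

open Finset

variable {ι : Type*} [LinearOrder ι]

def mixedRadixValue (s : Finset ι) (w a : ι → ℕ) : ℕ :=
  ∑ i ∈ s, a i * ∏ j ∈ s with j < i, (w j + 1)

lemma mixedRadixValue_empty (w a : ι → ℕ) : mixedRadixValue ∅ w a = 0 :=
  sum_empty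

lemma mixedRadixValue_insert_of_forall_lt {s : Finset ι} {m : ι} (hm : ∀ i ∈ s, i < m)
    (w a : ι → ℕ) :
    mixedRadixValue (insert m s) w a = mixedRadixValue s w a + a m * ∏ j ∈ s, (w j + 1) := by
  have hms : m ∉ s := fun h => lt_irrefl m (hm m h)
  have below_m : {j ∈ insert m s | j < m} = s := by
    rw [filter_insert, if_neg (lt_irrefl m)]
    exact filter_true_of_mem hm
  have below_i : ∀ i ∈ s, {j ∈ insert m s | j < i} = {j ∈ s | j < i} := fun i hi => by
    rw [filter_insert, if_neg (hm i hi).not_gt]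
  rw [mixedRadixValue, sum_insert hms, below_m, add_comm]
  exact congrArg (· + _) (sum_congr rfl fun i hi => by rw [below_i i hi])

lemma mixedRadixValue_self_add_one (s : Finset ι) (w : ι → ℕ) :
    mixedRadixValue s w w + 1 = ∏ j ∈ s, (w j + 1) := by
  induction s using Finset.induction_on_max with
  | empty => simp [mixedRadixValue_empty]
  | insert m s hm ih =>
    rw [mixedRadixValue_insert_of_forall_lt hm, prod_insert fun h => lt_irrefl m (hm m h), ← ih]
    ring

lemma exists_mixedRadixValue_add_one_eq_mul_of_insert {s : Finset ι} {m : ι}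
    (hm : ∀ i ∈ s, i < m) {w a : ι → ℕ} {k : ℕ}
    (hk : mixedRadixValue (insert m s) w a + 1 = k * ∏ j ∈ insert m s, (w j + 1)) :
    ∃ k', mixedRadixValue s w a + 1 = k' * ∏ j ∈ s, (w j + 1) ∧ k' + a m = k * (w m + 1) := by
  rw [mixedRadixValue_insert_of_forall_lt hm, prod_insert fun h => lt_irrefl m (hm m h)] at hk
  set P := ∏ j ∈ s, (w j + 1)
  have hsplit : (mixedRadixValue s w a + 1) + P * a m = P * (k * (w m + 1)) := by
    linarith
  obtain ⟨k', hk'⟩ : P ∣ mixedRadixValue s w a + 1 :=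
    (Nat.dvd_add_left (dvd_mul_right P (a m))).mp (hsplit ▸ dvd_mul_right P _)
  have hP : 0 < P := prod_pos fun j _ => Nat.succ_pos (w j)
  refine ⟨k', hk'.trans (mul_comm P k'), Nat.eq_of_mul_eq_mul_left hP ?_⟩
  rw [← hsplit, hk']; ring

lemma sum_add_le_of_mixedRadixValue_add_one_eq_mul (s : Finset ι) (w a : ι → ℕ) {k : ℕ}
    (hk : mixedRadixValue s w a + 1 = k * ∏ j ∈ s, (w j + 1)) :
    ∑ i ∈ s, w i + k ≤ ∑ i ∈ s, a i + 1 := by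
  induction s using Finset.induction_on_max generalizing k with
  | empty => simpa [mixedRadixValue_empty] using hk.symm.le
  | insert m s hm ih =>
    obtain ⟨k', hk', hcarry⟩ := exists_mixedRadixValue_add_one_eq_mul_of_insert hm hk
    have hk_pos : 0 < k := Nat.pos_of_ne_zero fun h => by simp [h] at hk
    have hwm : w m ≤ k * w m := Nat.le_mul_of_pos_left (w m) hk_pos
    have := ih hk'
    have hms : m ∉ s := fun h => lt_irrefl m (hm m h)
    rw [sum_insert hms, sum_insert hms]
    rw [mul_add_one] at hcarry
    omega

lemma eq_of_mixedRadixValue_add_one_eq_mul_of_sum_add_eq {s : Finset ι} {w a : ι → ℕ}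
    (hw : ∀ i ∈ s, 0 < w i) {k : ℕ}
    (hk : mixedRadixValue s w a + 1 = k * ∏ j ∈ s, (w j + 1))
    (hsum : ∑ i ∈ s, w i + k = ∑ i ∈ s, a i + 1) :
    k = 1 ∧ ∀ i ∈ s, a i = w i := by
  induction s using Finset.induction_on_max generalizing k with
  | empty => simpa [mixedRadixValue_empty] using hk.symm
  | insert m s hm ih =>
    have hms : m ∉ s := fun h => lt_irrefl m (hm m h)
    obtain ⟨k', hk', hcarry⟩ := exists_mixedRadixValue_add_one_eq_mul_of_insert hm hk
    have hbound := sum_add_le_of_mixedRadixValue_add_one_eq_mul s w a hk'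
    rw [sum_insert hms, sum_insert hms] at hsum
    rw [mul_add_one] at hcarry
    have hwm : 0 < w m := hw m (mem_insert_self m s)
    have hk_pos : 0 < k := Nat.pos_of_ne_zero fun h => by simp [h] at hk
    have hk_one : k = 1 :=
      le_antisymm (Nat.le_of_mul_le_mul_right (by omega : k * w m ≤ 1 * w m) hwm) hk_pos
    subst hk_one
    obtain ⟨rfl, heq⟩ := ih (fun i hi => hw i (mem_insert_of_mem hi)) hk' (by omega)
    exact ⟨rfl, (forall_mem_insert m s _).mpr ⟨by omega, heq⟩⟩

/-- Theorem 2 of the paper: uniqueness of the target frequency modulo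
`f + 1`, where `f = ∑ i, l i * Q i` and `Q i = ∏_{j<i} (l j + 1)`. -/
theorem mixed_radix_unique_mod (N : ℕ) (l l' : Fin N → ℕ)
    (h1 : ∀ i, 0 < l i)
    (h2 : ∑ i, l' i ≤ ∑ i, l i)
    (h3 : ∑ i, l i * ∏ j ∈ Finset.Iio i, (l j + 1)
        ≡ ∑ i, l' i * ∏ j ∈ Finset.Iio i, (l j + 1)
        [MOD (∑ i, l i * ∏ j ∈ Finset.Iio i, (l j + 1)) + 1]) :
    ∀ i, l i = l' i := by
  have hvalue : ∀ a : Fin N → ℕ,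
      ∑ i, a i * ∏ j ∈ Finset.Iio i, (l j + 1) = mixedRadixValue univ l a := fun a => by
    simp only [mixedRadixValue, filter_gt_eq_Iio]
  rw [hvalue, hvalue] at h3
  obtain ⟨k, hk⟩ : mixedRadixValue univ l l + 1 ∣ mixedRadixValue univ l l' + 1 :=
    ((h3.add_right 1).dvd_iff dvd_rfl).mp dvd_rfl
  rw [mixedRadixValue_self_add_one, mul_comm] at hk
  have hbound := sum_add_le_of_mixedRadixValue_add_one_eq_mul univ l l' hk
  have hk_pos : 0 < k := Nat.pos_of_ne_zero fun h => by simp [h] at hk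
  obtain ⟨-, heq⟩ :=
    eq_of_mixedRadixValue_add_one_eq_mul_of_sum_add_eq (fun i _ => h1 i) hk (by omega)
  exact fun i => (heq i (mem_univ i)).symm
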